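/- Let λ1, λ2 ≥ 0 be integers. Define Ψ on quadruples (a,b,c,d) of non-negative integers satisfying the Littelmann inequalities and the preatom condition for (λ1,λ2) by Ψ(a,b,c,d) = (a, b+1, c+1, d) if d = 0 or d = λ1, and Ψ(a,b,c,d) = (a, b, c+1, d+1) otherwise. Then Ψ is injective: if (a,b,c,d) and (a',b',c',d') both satisfy the Littelmann inequalities and the preatom condition for (λ1,λ2) and Ψ(a,b,c,d) = Ψ(a',b',c',d'), then (a,b,c,d) = (a',b',c',d'). -/

import Mathlib

/-- The Littelmann inequalities for (λ1,λ2) on a quadruple (a,b,c,d). -/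
def LittelmannIneq (l1 l2 a b c d : ℤ) : Prop :=
  b ≥ c ∧ c ≥ d ∧ d ≤ l1 ∧ c ≤ l2 + d ∧ b ≤ l1 - 2*d + 2*c ∧ a ≤ l2 + d - 2*c + b

/-- The preatom condition for (λ1,λ2) on a quadruple (a,b,c,d). -/
def PreatomCond (l1 _l2 b c d : ℤ) : Prop :=
  d = 0 ∨ d = l1 ∨ b = l1 - 2*d + 2*c

/-- The map Ψ on adapted strings realizing the embedding P(λ) → P(λ+ϖ2). -/
def PsiStr (l1 : ℤ) : ℤ × ℤ × ℤ × ℤ → ℤ × ℤ × ℤ × ℤ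
  | (a, b, c, d) =>
    if d = 0 ∨ d = l1 then (a, b + 1, c + 1, d) else (a, b, c + 1, d + 1)

/-!
Each branch of Ψ is a translation, hence injective, so only a collision between the two branches
has to be excluded. If `(a, b+1, c+1, d) = (a', b', c'+1, d'+1)` with `d' ∉ {0, λ1}`, the preatom
condition forces `b' = λ1 - 2d' + 2c'`, and then `b = λ1 - 2d + 2c + 1` violates the Littelmann
inequality `b ≤ λ1 - 2d + 2c`.
-/

section

variable {l1 l2 a b c d : ℤ}

theorem LittelmannIneq.b_le (h : LittelmannIneq l1 l2 a b c d) : b ≤ l1 - 2*d + 2*c :=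
  h.2.2.2.2.1

theorem PreatomCond.b_eq (h : PreatomCond l1 l2 b c d) (hd : ¬(d = 0 ∨ d = l1)) :
    b = l1 - 2*d + 2*c :=
  (h.resolve_left (not_or.1 hd).1).resolve_left (not_or.1 hd).2

end

theorem raise_bc_ne_raise_cd {l1 a b c d a' b' c' d' : ℤ}
    (hb : b ≤ l1 - 2*d + 2*c) (hb' : b' = l1 - 2*d' + 2*c') :
    ((a, b + 1, c + 1, d) : ℤ × ℤ × ℤ × ℤ) ≠ (a', b', c' + 1, d' + 1) := by
  simp only [ne_eq, Prod.mk.injEq, not_and]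
  intro _ _ _ _
  omega

theorem psi_injective_general (l1 l2 : ℤ)
    (a b c d a' b' c' d' : ℤ)
    (hL : LittelmannIneq l1 l2 a b c d) (hP : PreatomCond l1 l2 b c d)
    (hL' : LittelmannIneq l1 l2 a' b' c' d') (hP' : PreatomCond l1 l2 b' c' d')
    (heq : PsiStr l1 (a, b, c, d) = PsiStr l1 (a', b', c', d')) :
    (a, b, c, d) = (a', b', c', d') := by
  simp only [PsiStr] at heq
  split_ifs at heq with hA hA'
  · simpa using heq
  · exact absurd heq (raise_bc_ne_raise_cd hL.b_le (hP'.b_eq hA'))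
  · exact absurd heq.symm (raise_bc_ne_raise_cd hL'.b_le (hP.b_eq hA))
  · simpa using heq

/-- Ψ is injective on quadruples satisfying the Littelmann inequalities and the
preatom condition for (λ1,λ2). -/
theorem psi_injective (l1 l2 : ℤ) (hl1 : 0 ≤ l1) (hl2 : 0 ≤ l2)
    (a b c d a' b' c' d' : ℤ)
    (ha : 0 ≤ a) (hb : 0 ≤ b) (hc : 0 ≤ c) (hd : 0 ≤ d)
    (ha' : 0 ≤ a') (hb' : 0 ≤ b') (hc' : 0 ≤ c') (hd' : 0 ≤ d')
    (hL : LittelmannIneq l1 l2 a b c d) (hP : PreatomCond l1 l2 b c d)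
    (hL' : LittelmannIneq l1 l2 a' b' c' d') (hP' : PreatomCond l1 l2 b' c' d')
    (heq : PsiStr l1 (a, b, c, d) = PsiStr l1 (a', b', c', d')) :
    (a, b, c, d) = (a', b', c', d') :=
  psi_injective_general l1 l2 a b c d a' b' c' d' hL hP hL' hP' heq
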